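/- For all n ≥ 1, the total number of 1-ascents in all dispersed Dyck paths of length n+2 satisfies A(n+2) = dD(n) + D(n) + R(n), where dD(n) is the number of DDPs of length n, D(n) the total number of down steps, and R(n) the total number of right steps in all DDPs of length n. -/

import Mathlib

inductive DStep | up | down | right
deriving DecidableEq, Repr

instance : Fintype DStep :=
  ⟨{DStep.up, DStep.down, DStep.right}, fun x => by cases x <;> simp⟩

/-- Run a dispersed Dyck path from height `h`; `none` if an illegal step occurs,
otherwise the final height. Down steps require positive height; right steps require height 0. -/
def DStep.run : ℕ → List DStep → Option ℕ
  | h, [] => some h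
  | h, .up :: l => DStep.run (h + 1) l
  | h + 1, .down :: l => DStep.run h l
  | 0, .down :: _ => none
  | 0, .right :: l => DStep.run 0 l
  | _ + 1, .right :: _ => none

/-- A dispersed Dyck path: starts and ends at height 0, all steps legal. -/
def IsDDP (l : List DStep) : Prop := DStep.run 0 l = some 0

instance : DecidablePred IsDDP := fun l => by unfold IsDDP; infer_instance

/-- The finset of all dispersed Dyck paths of length `n`. -/
def DDPs (n : ℕ) : Finset (List.Vector DStep n) :=
  Finset.univ.filter (fun v => IsDDP v.toList)

/-- Number of dispersed Dyck paths of length `n`. -/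
def dD (n : ℕ) : ℕ := (DDPs n).card

/-- Total number of up steps over all DDPs of length `n`. -/
def U (n : ℕ) : ℕ := ∑ v ∈ DDPs n, v.toList.count DStep.up

/-- Total number of down steps over all DDPs of length `n`. -/
def D (n : ℕ) : ℕ := ∑ v ∈ DDPs n, v.toList.count DStep.down

/-- Total number of right steps over all DDPs of length `n`. -/
def R (n : ℕ) : ℕ := ∑ v ∈ DDPs n, v.toList.count DStep.right

/-- `i` is the position of a 1-ascent in `l`: an up step with no adjacent up step. -/
def IsOneAscentAt (l : List DStep) (i : ℕ) : Prop :=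
  l[i]? = some .up ∧ l[i + 1]? ≠ some .up ∧ (i = 0 ∨ l[i - 1]? ≠ some .up)

instance (l : List DStep) : DecidablePred (IsOneAscentAt l) := fun i => by
  unfold IsOneAscentAt; infer_instance

/-- Number of 1-ascents in `l`. -/
def oneAsc (l : List DStep) : ℕ :=
  ((Finset.range l.length).filter (IsOneAscentAt l)).card

/-- Total number of 1-ascents over all DDPs of length `n`. -/
def A (n : ℕ) : ℕ := ∑ v ∈ DDPs n, oneAsc v.toList

/-- Signed final height of a plain path (ignoring any right steps). -/
def psum : List DStep → ℤ
  | [] => 0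
  | .up :: l => 1 + psum l
  | .down :: l => -1 + psum l
  | .right :: l => psum l

/-!
Deleting the peak `UD` formed by a 1-ascent at position `i` of a DDP of length `n + 2` leaves a
DDP of length `n`, and inserting `UD` back at `i` undoes this. Inserting `UD` at position `j` of a
DDP `w` creates a 1-ascent exactly when `j = 0` or step `j - 1` of `w` is a down or right step.
So the pairs (path, 1-ascent) of length `n + 2` correspond to pairs (path, such `j`) of length `n`,
and each `w` contributes `1 + #down + #right` of the latter.
-/

open Finset

namespace DStep

lemma run_append (l₁ l₂ : List DStep) (h : ℕ) :
    run h (l₁ ++ l₂) = (run h l₁).bind (run · l₂) := by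
  induction l₁ generalizing h with
  | nil => rfl
  | cons a t ih => cases a <;> cases h <;> simp [run, ih]

lemma head?_of_run_succ_eq_zero {l : List DStep} {h : ℕ} (hl : run (h + 1) l = some 0) :
    l.head? = some up ∨ l.head? = some down := by
  match l with
  | [] => simp [run] at hl
  | up :: _ => simp
  | down :: _ => simp
  | right :: _ => simp [run] at hl

end DStep

def insertUpDown (l : List DStep) (j : ℕ) : List DStep :=
  l.take j ++ .up :: .down :: l.drop j

def eraseUpDown (l : List DStep) (i : ℕ) : List DStep :=
  l.take i ++ l.drop (i + 2)

lemma length_insertUpDown {l : List DStep} {j : ℕ} (hj : j ≤ l.length) :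
    (insertUpDown l j).length = l.length + 2 := by
  simp [insertUpDown]; omega

lemma length_eraseUpDown {l : List DStep} {i : ℕ} (hi : i + 2 ≤ l.length) :
    (eraseUpDown l i).length + 2 = l.length := by
  simp [eraseUpDown]; omega

lemma eraseUpDown_insertUpDown {l : List DStep} {j : ℕ} (hj : j ≤ l.length) :
    eraseUpDown (insertUpDown l j) j = l := by
  have htake : (l.take j).length = j := List.length_take_of_le hj
  simp [eraseUpDown, insertUpDown, List.take_left' htake, List.drop_append, List.drop_take, htake]

lemma insertUpDown_eraseUpDown {l : List DStep} {i : ℕ} (hup : l[i]? = some .up)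
    (hdown : l[i + 1]? = some .down) : insertUpDown (eraseUpDown l i) i = l := by
  obtain ⟨hi, hget⟩ := List.getElem?_eq_some_iff.1 hup
  obtain ⟨hi', hget'⟩ := List.getElem?_eq_some_iff.1 hdown
  have htake : (l.take i).length = i := List.length_take_of_le hi.le
  rw [insertUpDown, eraseUpDown, List.take_left' htake, List.drop_left' htake,
    ← hget, ← hget', ← List.drop_eq_getElem_cons hi', ← List.drop_eq_getElem_cons hi,
    List.take_append_drop]

lemma isDDP_insertUpDown (l : List DStep) (j : ℕ) : IsDDP (insertUpDown l j) ↔ IsDDP l := by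
  conv_rhs => rw [← List.take_append_drop j l]
  simp only [IsDDP, insertUpDown, DStep.run_append]
  rfl

lemma isOneAscentAt_insertUpDown {l : List DStep} {j : ℕ} (hj : j ≤ l.length) :
    IsOneAscentAt (insertUpDown l j) j ↔ j = 0 ∨ l[j - 1]? ≠ some .up := by
  have htake : (l.take j).length = j := List.length_take_of_le hj
  have hat : (insertUpDown l j)[j]? = some .up := by
    rw [insertUpDown, List.getElem?_append_right htake.le, htake, Nat.sub_self]; rfl
  have hnext : (insertUpDown l j)[j + 1]? = some .down := by
    rw [insertUpDown, List.getElem?_append_right (by omega), htake, Nat.add_sub_cancel_left]; rfl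
  have hprev (hpos : 0 < j) : (insertUpDown l j)[j - 1]? = l[j - 1]? := by
    rw [insertUpDown, List.getElem?_append_left (by omega), List.getElem?_take_of_lt (by omega)]
  rcases Nat.eq_zero_or_pos j with rfl | hpos
  · simp [IsOneAscentAt, hat, hnext]
  · simp [IsOneAscentAt, hat, hnext, hprev hpos, hpos.ne']

lemma IsDDP.getElem?_succ_eq_down {l : List DStep} {i : ℕ} (hl : IsDDP l)
    (hup : l[i]? = some .up) (hnu : l[i + 1]? ≠ some .up) : l[i + 1]? = some .down := by
  obtain ⟨hi, hget⟩ := List.getElem?_eq_some_iff.1 hup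
  have hsplit : l = l.take i ++ .up :: l.drop (i + 1) := by
    rw [← hget, ← List.drop_eq_getElem_cons hi, List.take_append_drop]
  have hrun : DStep.run 0 l = some 0 := hl
  rw [hsplit, DStep.run_append] at hrun
  obtain ⟨h, -, hh⟩ := Option.bind_eq_some_iff.1 hrun
  rw [← List.head?_drop] at hnu ⊢
  exact (DStep.head?_of_run_succ_eq_zero hh).resolve_left hnu

lemma IsOneAscentAt.succ_lt_length {l : List DStep} {i : ℕ} (hl : IsDDP l)
    (h : IsOneAscentAt l i) : i + 1 < l.length :=
  (List.getElem?_eq_some_iff.1 (hl.getElem?_succ_eq_down h.1 h.2.1)).1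

lemma IsOneAscentAt.insertUpDown_eraseUpDown {l : List DStep} {i : ℕ} (hl : IsDDP l)
    (h : IsOneAscentAt l i) : insertUpDown (eraseUpDown l i) i = l :=
  _root_.insertUpDown_eraseUpDown h.1 (hl.getElem?_succ_eq_down h.1 h.2.1)

lemma card_filter_getElem?_eq_some {α : Type*} [DecidableEq α] (l : List α) (a : α) :
    #((range l.length).filter fun k => l[k]? = some a) = l.count a := by
  induction l with
  | nil => simp
  | cons b t ih =>
    rw [card_filter] at ih ⊢
    rw [List.length_cons, sum_range_succ', List.count_cons, ← ih]
    by_cases hba : b = a <;> simp [hba]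

def oneAscentSlots (l : List DStep) : Finset ℕ :=
  (range (l.length + 1)).filter fun j => j = 0 ∨ l[j - 1]? ≠ some .up

lemma mem_oneAscentSlots {l : List DStep} {j : ℕ} :
    j ∈ oneAscentSlots l ↔ j ≤ l.length ∧ IsOneAscentAt (insertUpDown l j) j := by
  rw [oneAscentSlots, mem_filter, mem_range, Nat.lt_succ_iff]
  exact and_congr_right isOneAscentAt_insertUpDown |>.symm

lemma card_oneAscentSlots (l : List DStep) :
    #(oneAscentSlots l) = 1 + l.count .down + l.count .right := by
  have hslot : ∀ k ∈ range l.length,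
      (if k + 1 = 0 ∨ l[k + 1 - 1]? ≠ some DStep.up then 1 else 0) =
        (if l[k]? = some .down then 1 else 0) + (if l[k]? = some .right then 1 else 0) := by
    intro k hk
    obtain ⟨c, hc⟩ : ∃ c, l[k]? = some c := ⟨_, List.getElem?_eq_getElem (mem_range.1 hk)⟩
    cases c <;> simp [hc]
  rw [oneAscentSlots, card_filter, sum_range_succ', sum_congr rfl hslot, sum_add_distrib,
    ← card_filter, ← card_filter, card_filter_getElem?_eq_some,
    card_filter_getElem?_eq_some, if_pos (Or.inl rfl)]
  ring

def ddpLists (n : ℕ) : Finset (List DStep) :=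
  (DDPs n).map ⟨List.Vector.toList, List.Vector.toList_injective⟩

lemma mem_ddpLists {n : ℕ} {l : List DStep} : l ∈ ddpLists n ↔ l.length = n ∧ IsDDP l := by
  constructor
  · intro h
    obtain ⟨v, hv, rfl⟩ := mem_map.1 h
    exact ⟨v.toList_length, (mem_filter.1 hv).2⟩
  · rintro ⟨hlen, hl⟩
    exact mem_map.2 ⟨⟨l, hlen⟩, mem_filter.2 ⟨mem_univ _, hl⟩, rfl⟩

lemma card_sigma_oneAscents_eq (n : ℕ) :
    #((ddpLists (n + 2)).sigma fun l => (range l.length).filter (IsOneAscentAt l)) =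
      #((ddpLists n).sigma oneAscentSlots) := by
  refine card_nbij' (fun p => ⟨eraseUpDown p.1 p.2, p.2⟩) (fun p => ⟨insertUpDown p.1 p.2, p.2⟩)
    ?_ ?_ ?_ ?_
  · rintro ⟨l, i⟩ hp
    simp only [coe_sigma, Set.mem_sigma_iff, mem_coe, mem_filter, mem_range, mem_ddpLists,
      mem_oneAscentSlots] at hp ⊢
    obtain ⟨⟨hlen, hl⟩, -, hasc⟩ := hp
    have hins := hasc.insertUpDown_eraseUpDown hl
    have hi := hasc.succ_lt_length hl
    have hw := length_eraseUpDown hi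
    refine ⟨⟨by omega, (isDDP_insertUpDown _ _).1 (by rwa [hins])⟩, by omega, by rwa [hins]⟩
  · rintro ⟨w, j⟩ hp
    simp only [coe_sigma, Set.mem_sigma_iff, mem_coe, mem_filter, mem_range, mem_ddpLists,
      mem_oneAscentSlots] at hp ⊢
    obtain ⟨⟨hlen, hw⟩, hj, hasc⟩ := hp
    rw [length_insertUpDown hj, isDDP_insertUpDown]
    exact ⟨⟨by omega, hw⟩, by omega, hasc⟩
  · rintro ⟨l, i⟩ hp
    simp only [coe_sigma, Set.mem_sigma_iff, mem_coe, mem_filter, mem_ddpLists] at hp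
    dsimp only
    rw [hp.2.2.insertUpDown_eraseUpDown hp.1.2]
  · rintro ⟨w, j⟩ hp
    simp only [coe_sigma, Set.mem_sigma_iff, mem_coe, mem_oneAscentSlots] at hp
    dsimp only
    rw [eraseUpDown_insertUpDown hp.2.1]

theorem oneAscent_formula_general (n : ℕ) : A (n + 2) = dD n + D n + R n := by
  have hA : A (n + 2) =
      #((ddpLists (n + 2)).sigma fun l => (range l.length).filter (IsOneAscentAt l)) := by
    rw [card_sigma, ddpLists, sum_map]
    rfl
  have hDR : dD n + D n + R n = #((ddpLists n).sigma oneAscentSlots) := by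
    rw [card_sigma, ddpLists, sum_map, dD, D, R, card_eq_sum_ones, ← sum_add_distrib,
      ← sum_add_distrib]
    exact sum_congr rfl fun v _ => (card_oneAscentSlots v.toList).symm
  rw [hA, hDR, card_sigma_oneAscents_eq]

/-- For `n ≥ 1`, the total number of 1-ascents in all DDPs of length `n + 2` equals
`dD(n) + D(n) + R(n)`. -/
theorem oneAscent_formula (n : ℕ) (hn : 1 ≤ n) : A (n + 2) = dD n + D n + R n :=
  oneAscent_formula_general n
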